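/- (Consequence (4.10), answering the open problem of Andras and Baricz) Let c ∈ ℂ, let κ ∈ ℂ with Re(κ) ≥ −1/2 and κ ∉ {0, −1, −2, …}, and let M > 0. If |φ_{κ,c}(z)/z − 1| < M for all z ∈ 𝕌, then |φ_{κ+1,c}(z)/z − 1| < M for all z ∈ 𝕌, where φ_{μ,c}(z)/z is understood as its analytic extension to 𝕌 with value 1 at z = 0. -/

import Mathlib

open Complex Metric Set

noncomputable section

/-- The open unit disk 𝕌. -/
def unitDisk : Set ℂ := Metric.ball (0 : ℂ) 1

/-- The class 𝒜 of normalized analytic functions on 𝕌. -/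
def InA (f : ℂ → ℂ) : Prop :=
  DifferentiableOn ℂ f unitDisk ∧ f 0 = 0 ∧ deriv f 0 = 1

/-- ℋ_0 : analytic on 𝕌 with value 0 at the origin. -/
def InH0 (q : ℂ → ℂ) : Prop := DifferentiableOn ℂ q unitDisk ∧ q 0 = 0

/-- ℋ_1 : analytic on 𝕌 with value 1 at the origin. -/
def InH1 (q : ℂ → ℂ) : Prop := DifferentiableOn ℂ q unitDisk ∧ q 0 = 1

/-- Univalent (analytic and injective) on 𝕌. -/
def Univalent (h : ℂ → ℂ) : Prop :=
  DifferentiableOn ℂ h unitDisk ∧ Set.InjOn h unitDisk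

/-- The coefficient (−c)^n / (4^n (κ)_n n!). -/
def besselCoeff (c κ : ℂ) (n : ℕ) : ℂ :=
  (-c) ^ n / ((4 : ℂ) ^ n * (ascPochhammer ℂ n).eval κ * (n.factorial : ℂ))

/-- The n-th Taylor coefficient of f at 0. -/
def taylorCoeff (f : ℂ → ℂ) (n : ℕ) : ℂ := iteratedDeriv n f 0 / (n.factorial : ℂ)

/-- φ_{κ,c} : the normalized generalized Bessel function of the first kind. -/
def genBessel (κ c : ℂ) (z : ℂ) : ℂ := ∑' n : ℕ, besselCoeff c κ n * z ^ (n + 1)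

/-- The operator B_κ^c, the Hadamard product of φ_{κ,c} with f. -/
def besselOp (c κ : ℂ) (f : ℂ → ℂ) (z : ℂ) : ℂ :=
  ∑' n : ℕ, besselCoeff c κ n * taylorCoeff f (n + 1) * z ^ (n + 1)

/-- Subordination f ≺ F on the unit disk. -/
def Subordinate (f F : ℂ → ℂ) : Prop :=
  ∃ w : ℂ → ℂ, DifferentiableOn ℂ w unitDisk ∧ w 0 = 0 ∧
    Set.MapsTo w unitDisk unitDisk ∧ ∀ z ∈ unitDisk, f z = F (w z)

/-- E(q) : boundary points where q blows up. -/
def Eset (q : ℂ → ℂ) : Set ℂ :=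
  {ζ | ζ ∈ Metric.sphere (0 : ℂ) 1 ∧
    Filter.Tendsto q (nhdsWithin ζ unitDisk) (Bornology.cobounded ℂ)}

/-- The class 𝒬. -/
def InQ (q : ℂ → ℂ) : Prop :=
  AnalyticOnNhd ℂ q (Metric.closedBall (0 : ℂ) 1 \ Eset q) ∧
  Set.InjOn q (Metric.closedBall (0 : ℂ) 1 \ Eset q) ∧
  ∀ ζ ∈ Metric.sphere (0 : ℂ) 1 \ Eset q, deriv q ζ ≠ 0

def InQ0 (q : ℂ → ℂ) : Prop := InQ q ∧ q 0 = 0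

def InQ1 (q : ℂ → ℂ) : Prop := InQ q ∧ q 0 = 1

/-- The admissibility class Φ_H[Ω,q] (Definition 2.1), with parameter κ. -/
def PhiH (κ : ℂ) (Ω : Set ℂ) (q : ℂ → ℂ) (φ : ℂ → ℂ → ℂ → ℂ → ℂ) : Prop :=
  ∀ z ∈ unitDisk, ∀ ζ ∈ Metric.sphere (0 : ℂ) 1 \ Eset q, ∀ k : ℝ, 1 ≤ k →
    ∀ u v w : ℂ, u = q ζ →
      v = ((k : ℂ) * ζ * deriv q ζ + (κ - 1) * q ζ) / κ →
      ((κ * (κ - 1) * w - (κ - 2) * (κ - 1) * u) / (κ * v - (κ - 1) * u) -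
          (2 * κ - 3)).re ≥ k * (ζ * deriv (deriv q) ζ / deriv q ζ + 1).re →
      φ u v w z ∉ Ω

/-- The admissibility class Φ_{H,1}[Ω,q] (Definition 2.3), with parameter κ. -/
def PhiH1 (κ : ℂ) (Ω : Set ℂ) (q : ℂ → ℂ) (φ : ℂ → ℂ → ℂ → ℂ → ℂ) : Prop :=
  ∀ z ∈ unitDisk, ∀ ζ ∈ Metric.sphere (0 : ℂ) 1 \ Eset q, q ζ ≠ 0 → ∀ k : ℝ, 1 ≤ k →
    ∀ u v w : ℂ, u = q ζ →
      v = (1 / (κ - 1)) * ((k : ℂ) * ζ * deriv q ζ / q ζ + κ * q ζ - 1) →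
      ((κ - 1) * v * ((κ - 1) * (w - v) + 1 - w) / ((κ - 1) * v + 1 - κ * u) -
          (2 * κ * u - 1 - (κ - 1) * v)).re ≥
        k * (ζ * deriv (deriv q) ζ / deriv q ζ + 1).re →
      φ u v w z ∉ Ω

/-- The admissibility class Φ_{H,2}[Ω,q] (Definition 2.5), with parameter κ. -/
def PhiH2 (κ : ℂ) (Ω : Set ℂ) (q : ℂ → ℂ) (φ : ℂ → ℂ → ℂ → ℂ → ℂ) : Prop :=
  ∀ z ∈ unitDisk, ∀ ζ ∈ Metric.sphere (0 : ℂ) 1 \ Eset q, ∀ k : ℝ, 1 ≤ k →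
    ∀ u v w : ℂ, u = q ζ →
      v = ((k : ℂ) * ζ * deriv q ζ + κ * q ζ) / κ →
      ((κ - 1) * (w - u) / (v - u) + (1 - 2 * κ)).re ≥
        k * (ζ * deriv (deriv q) ζ / deriv q ζ + 1).re →
      φ u v w z ∉ Ω

/-- The admissibility class Φ_H[Ω,M] (Definition 2.2), with parameter κ. -/
def PhiHM (κ : ℂ) (Ω : Set ℂ) (M : ℝ) (φ : ℂ → ℂ → ℂ → ℂ → ℂ) : Prop :=
  ∀ z ∈ unitDisk, ∀ θ : ℝ, ∀ k : ℝ, 1 ≤ k → ∀ L : ℂ,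
    (L * Complex.exp (-(θ : ℂ) * Complex.I)).re ≥ (k - 1) * k * M →
    φ ((M : ℂ) * Complex.exp ((θ : ℂ) * Complex.I))
      (((k : ℂ) + κ - 1) / κ * (M : ℂ) * Complex.exp ((θ : ℂ) * Complex.I))
      ((L + (κ - 1) * (2 * (k : ℂ) + κ - 2) * (M : ℂ) * Complex.exp ((θ : ℂ) * Complex.I)) /
        (κ * (κ - 1))) z ∉ Ω

/-- The admissibility class Φ′_H[Ω,q] (Definition 3.1), with parameter κ. -/
def PhiH' (κ : ℂ) (Ω : Set ℂ) (q : ℂ → ℂ) (φ : ℂ → ℂ → ℂ → ℂ → ℂ) : Prop :=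
  ∀ z ∈ unitDisk, ∀ ς ∈ Metric.sphere (0 : ℂ) 1, ∀ m : ℝ, 1 ≤ m →
    ∀ u v w : ℂ, u = q z →
      v = (z * deriv q z + (m : ℂ) * (κ - 1) * q z) / ((m : ℂ) * κ) →
      ((κ * (κ - 1) * w - (κ - 2) * (κ - 1) * u) / (κ * v - (κ - 1) * u) -
          (2 * κ - 3)).re ≤ (1 / m) * (z * deriv (deriv q) z / deriv q z + 1).re →
      φ u v w ς ∈ Ω

/-- The quotient g/h extended analytically with value 1 at the origin. -/
def ratio (g h : ℂ → ℂ) (z : ℂ) : ℂ := if z = 0 then 1 else g z / h z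

/-- The quotient g(z)/z extended analytically with value 1 at the origin. -/
def divZ (g : ℂ → ℂ) (z : ℂ) : ℂ := if z = 0 then 1 else g z / z

/-- z ↦ φ(B_{κ+1}^c f(z), B_κ^c f(z), B_{κ−1}^c f(z); z). -/
def opPhi (c κ : ℂ) (φ : ℂ → ℂ → ℂ → ℂ → ℂ) (f : ℂ → ℂ) (z : ℂ) : ℂ :=
  φ (besselOp c (κ + 1) f z) (besselOp c κ f z) (besselOp c (κ - 1) f z) z

/-!
Write `g_μ(z) = φ_{μ,c}(z) / z = ∑ bₙ(μ) zⁿ`, an entire function. The coefficient identity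
`(κ + n) bₙ(κ + 1) = κ bₙ(κ)` gives the recurrence `κ g_κ = κ g_{κ+1} + z g'_{κ+1}`.
If `|g_{κ+1} - 1|` reached `M` in `𝕌`, Jack's lemma at a point `z₀` of least modulus where it
does gives `z₀ g'_{κ+1}(z₀) = k (g_{κ+1}(z₀) - 1)` with `k ≥ 1`, so
`κ (g_κ(z₀) - 1) = (κ + k) (g_{κ+1}(z₀) - 1)`. As `Re κ ≥ -1/2` and `k ≥ 1`, `|κ + k| ≥ |κ|`,
hence `|g_κ(z₀) - 1| ≥ M`.
-/

open Filter Topology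

lemma HasDerivAt.im_eq_zero_of_re_le_on_circle {F : ℂ → ℂ} {l : ℂ} (hF : HasDerivAt F l 1)
    (hle : ∀ θ : ℝ, (F (cexp (θ * I))).re ≤ (F 1).re) : l.im = 0 := by
  have hexp : HasDerivAt (fun ζ : ℂ => cexp (ζ * I)) I ((0 : ℝ) : ℂ) := by
    simpa using ((hasDerivAt_id (0 : ℂ)).mul_const I).cexp
  have hderiv : HasDerivAt (fun θ : ℝ => (F (cexp (θ * I))).re) (l * I).re 0 := by
    have hF' : HasDerivAt F l (cexp (((0 : ℝ) : ℂ) * I)) := by simpa using hF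
    simpa [Function.comp_def] using (hF'.comp ((0 : ℝ) : ℂ) hexp).real_of_complex
  have hmax : IsLocalMax (fun θ : ℝ => (F (cexp (θ * I))).re) 0 :=
    Eventually.of_forall fun θ => by simpa using hle θ
  simpa using hmax.hasDerivAt_eq_zero hderiv

lemma HasDerivAt.one_le_re_of_re_sub_le_on_Icc {F : ℂ → ℂ} {l : ℂ} (hF : HasDerivAt F l 1)
    (hle : ∀ t ∈ Icc (0 : ℝ) 1, (F t).re - t ≤ (F 1).re - 1) : 1 ≤ l.re := by
  have hderiv : HasDerivWithinAt (fun t : ℝ => (F t).re - t) (l.re - 1) (Icc 0 1) 1 := by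
    have hF' : HasDerivAt F l ((1 : ℝ) : ℂ) := by simpa using hF
    exact (hF'.real_of_complex.sub (hasDerivAt_id 1)).hasDerivWithinAt
  have hmax : IsLocalMaxOn (fun t : ℝ => (F t).re - t) (Icc 0 1) 1 :=
    (isMaxOn_iff.mpr fun t ht => by simpa using hle t ht).localize
  have hcone : (-1 : ℝ) ∈ posTangentConeAt (Icc (0 : ℝ) 1) 1 := by
    simpa using sub_mem_posTangentConeAt_of_segment_subset
      ((convex_Icc (0 : ℝ) 1).segment_subset (by norm_num : (1 : ℝ) ∈ Icc 0 1)
        (by norm_num : (0 : ℝ) ∈ Icc 0 1))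
  simpa using hmax.hasFDerivWithinAt_nonpos hderiv.hasFDerivWithinAt hcone

lemma jack_lemma_at_one {F : ℂ → ℂ} {l : ℂ}
    (hd : DifferentiableOn ℂ F (ball 0 1)) (hF : HasDerivAt F l 1) (h0 : F 0 = 0) (h1 : F 1 = 1)
    (hle : ∀ w ∈ closedBall (0 : ℂ) 1, ‖F w‖ ≤ 1) : ∃ k : ℝ, 1 ≤ k ∧ l = k := by
  have hschwarz : ∀ w : ℂ, ‖w‖ < 1 → ‖F w‖ ≤ ‖w‖ := fun w hw =>
    norm_le_norm_of_mapsTo_ball hd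
      (fun z hz => mem_closedBall_zero_iff.mpr (hle z (ball_subset_closedBall hz))) h0 hw
  have him : l.im = 0 := hF.im_eq_zero_of_re_le_on_circle fun θ => by
    rw [h1, one_re]
    exact (re_le_norm _).trans (hle _ (by simp [norm_exp_ofReal_mul_I]))
  have hre : 1 ≤ l.re := hF.one_le_re_of_re_sub_le_on_Icc fun t ht => by
    rw [h1, one_re, sub_self, sub_nonpos]
    rcases ht.2.lt_or_eq with ht1 | rfl
    · calc (F t).re ≤ ‖F t‖ := re_le_norm _
        _ ≤ ‖(t : ℂ)‖ := hschwarz t (by simpa [abs_of_nonneg ht.1] using ht1)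
        _ = t := by simp [abs_of_nonneg ht.1]
    · simp [h1]
  exact ⟨l.re, hre, Complex.ext rfl (by simpa using him)⟩

lemma jack_lemma {P : ℂ → ℂ} {z₀ : ℂ} (hd : DifferentiableOn ℂ P (ball 0 ‖z₀‖))
    (hz₀ : DifferentiableAt ℂ P z₀) (h0 : P 0 = 0)
    (hmax : ∀ z ∈ closedBall (0 : ℂ) ‖z₀‖, ‖P z‖ ≤ ‖P z₀‖) (hne : P z₀ ≠ 0) :
    ∃ k : ℝ, 1 ≤ k ∧ z₀ * deriv P z₀ = k * P z₀ := by
  have hz₀0 : z₀ ≠ 0 := by rintro rfl; exact hne h0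
  have hscale : ∀ w ∈ closedBall (0 : ℂ) 1, w * z₀ ∈ closedBall 0 ‖z₀‖ := fun w hw => by
    simpa [norm_mul] using mul_le_of_le_one_left (norm_nonneg z₀) (mem_closedBall_zero_iff.mp hw)
  have hderiv : HasDerivAt (fun w => P (w * z₀) / P z₀) (deriv P z₀ * z₀ / P z₀) 1 := by
    have hP' : HasDerivAt P (deriv P z₀) (1 * z₀) := by simpa using hz₀.hasDerivAt
    simpa using (hP'.comp (1 : ℂ) (hasDerivAt_mul_const z₀)).div_const (P z₀)
  have hdF : DifferentiableOn ℂ (fun w => P (w * z₀) / P z₀) (ball 0 1) := fun w hw =>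
    have hwz : w * z₀ ∈ ball 0 ‖z₀‖ := by
      simpa [norm_mul, hz₀0] using mem_ball_zero_iff.mp hw
    ((hd.differentiableAt (isOpen_ball.mem_nhds hwz)).comp w
      (differentiableAt_id.mul_const z₀)).div_const _ |>.differentiableWithinAt
  have hle : ∀ w ∈ closedBall (0 : ℂ) 1, ‖P (w * z₀) / P z₀‖ ≤ 1 := fun w hw => by
    rw [norm_div, div_le_one (norm_pos_iff.mpr hne)]
    exact hmax _ (hscale w hw)
  obtain ⟨k, hk, hlk⟩ :=
    jack_lemma_at_one hdF hderiv (by simp [h0]) (by simp [hne]) hle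
  exact ⟨k, hk, by rw [← hlk]; field_simp⟩

lemma exists_norm_eq_of_norm_lt_of_le {E F : Type*} [NormedAddCommGroup E] [NormedSpace ℝ E]
    [ProperSpace E] [NormedAddCommGroup F] {P : E → F} (hP : Continuous P) {M : ℝ}
    (h0 : ‖P 0‖ < M) {z₁ : E} (h₁ : M ≤ ‖P z₁‖) :
    ∃ z₀, ‖z₀‖ ≤ ‖z₁‖ ∧ ‖P z₀‖ = M ∧ ∀ z ∈ closedBall (0 : E) ‖z₀‖, ‖P z‖ ≤ M := by
  set A := closedBall (0 : E) ‖z₁‖ ∩ {z | M ≤ ‖P z‖}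
  have hA : IsCompact A :=
    (isCompact_closedBall _ _).inter_right (isClosed_le continuous_const hP.norm)
  obtain ⟨z₀, ⟨hz₀z₁, hz₀M⟩, hmin⟩ :=
    hA.exists_isMinOn ⟨z₁, by simp, h₁⟩ continuous_norm.continuousOn
  have hz₀ : ‖z₀‖ ≠ 0 := by
    intro h
    rw [norm_eq_zero.mp h] at hz₀M
    exact h0.not_ge hz₀M
  have hball : ball (0 : E) ‖z₀‖ ⊆ {z | ‖P z‖ ≤ M} := fun z hz => by
    show ‖P z‖ ≤ M
    by_contra! hzM
    have hzA : z ∈ A := ⟨mem_closedBall_zero_iff.mpr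
      ((mem_ball_zero_iff.mp hz).le.trans (mem_closedBall_zero_iff.mp hz₀z₁)), hzM.le⟩
    exact (mem_ball_zero_iff.mp hz).not_ge (hmin hzA)
  have hclosed : closedBall (0 : E) ‖z₀‖ ⊆ {z | ‖P z‖ ≤ M} := by
    rw [← closure_ball 0 hz₀]
    exact closure_minimal hball (isClosed_le hP.norm continuous_const)
  exact ⟨z₀, mem_closedBall_zero_iff.mp hz₀z₁,
    le_antisymm (hclosed (mem_closedBall_zero_iff.mpr le_rfl)) hz₀M, hclosed⟩

lemma summable_succ_mul_norm_mul_pow_of_norm_succ_le {E : Type*} [SeminormedAddCommGroup E]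
    {a : ℕ → E} {C : ℝ} (ha : ∀ᶠ n : ℕ in atTop, ‖a (n + 1)‖ ≤ C / (n + 1) * ‖a n‖)
    {R : ℝ} (hR : 0 ≤ R) : Summable fun n : ℕ => (n + 1) * ‖a n‖ * R ^ n := by
  refine summable_of_ratio_norm_eventually_le (r := 1 / 2) (by norm_num) ?_
  filter_upwards [ha, eventually_ge_atTop ⌈4 * C * R⌉₊] with n hn hN
  have hN' : 4 * C * R ≤ n := (Nat.le_ceil _).trans (by exact_mod_cast hN)
  have hn1 : (0 : ℝ) < n + 1 := by positivity
  have hx : 0 ≤ ‖a n‖ * R ^ n := by positivity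
  have hratio : (n + 2) * (C / (n + 1)) * R ≤ (n + 1) / 2 := by
    rw [mul_div_assoc', div_mul_eq_mul_div, div_le_div_iff₀ hn1 two_pos]
    nlinarith
  rw [Real.norm_of_nonneg (by positivity), Real.norm_of_nonneg (by positivity)]
  push_cast
  calc (n + 1 + 1) * ‖a (n + 1)‖ * R ^ (n + 1)
      ≤ (n + 2) * (C / (n + 1) * ‖a n‖) * R ^ (n + 1) := by
        rw [show (n : ℝ) + 1 + 1 = n + 2 by ring]; gcongr
    _ = ((n + 2) * (C / (n + 1)) * R) * (‖a n‖ * R ^ n) := by ring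
    _ ≤ (n + 1) / 2 * (‖a n‖ * R ^ n) := by gcongr
    _ = 1 / 2 * ((n + 1) * ‖a n‖ * R ^ n) := by ring

lemma besselCoeff_zero (c μ : ℂ) : besselCoeff c μ 0 = 1 := by
  simp [besselCoeff]

lemma besselCoeff_succ (c μ : ℂ) (n : ℕ) :
    besselCoeff c μ (n + 1) = besselCoeff c μ n * (-c / (4 * (μ + n) * (n + 1))) := by
  simp only [besselCoeff, ascPochhammer_succ_eval, pow_succ, Nat.factorial_succ]
  rw [div_mul_div_comm]
  push_cast
  ring

lemma eventually_norm_besselCoeff_succ_le (c μ : ℂ) :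
    ∀ᶠ n : ℕ in atTop,
      ‖besselCoeff c μ (n + 1)‖ ≤ ‖c‖ / 4 / (n + 1) * ‖besselCoeff c μ n‖ := by
  filter_upwards [eventually_ge_atTop ⌈‖μ‖ + 1⌉₊] with n hn
  have hμn : 1 ≤ ‖μ + n‖ := by
    have := norm_sub_norm_le (n : ℂ) (-μ)
    rw [norm_neg, Complex.norm_natCast, sub_neg_eq_add, add_comm] at this
    linarith [(Nat.le_ceil (‖μ‖ + 1)).trans (Nat.cast_le.mpr hn)]
  rw [besselCoeff_succ, norm_mul, norm_div, norm_neg, norm_mul, norm_mul,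
    show ((n : ℂ) + 1) = ((n + 1 : ℕ) : ℂ) by push_cast; ring, Complex.norm_natCast]
  push_cast
  rw [mul_comm]
  refine mul_le_mul_of_nonneg_right ?_ (norm_nonneg _)
  calc ‖c‖ / (‖(4 : ℂ)‖ * ‖μ + n‖ * (n + 1)) ≤ ‖c‖ / (4 * 1 * (n + 1)) := by
        gcongr; norm_num
    _ = ‖c‖ / 4 / (n + 1) := by rw [mul_one, div_div]

lemma summable_succ_mul_norm_besselCoeff_mul_pow (c μ : ℂ) {R : ℝ} (hR : 0 ≤ R) :
    Summable fun n : ℕ => (n + 1) * ‖besselCoeff c μ n‖ * R ^ n :=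
  summable_succ_mul_norm_mul_pow_of_norm_succ_le (eventually_norm_besselCoeff_succ_le c μ) hR

/-- `φ_{μ,c}(z) / z` as an entire power series. -/
def besselPowerSeries (c μ : ℂ) (z : ℂ) : ℂ := ∑' n : ℕ, besselCoeff c μ n * z ^ n

lemma besselPowerSeries_zero (c μ : ℂ) : besselPowerSeries c μ 0 = 1 := by
  rw [besselPowerSeries, tsum_eq_single 0 fun n hn => by simp [hn]]
  simp [besselCoeff_zero]

lemma divZ_genBessel (c μ : ℂ) : divZ (genBessel μ c) = besselPowerSeries c μ := by
  ext z
  rcases eq_or_ne z 0 with rfl | hz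
  · simp [divZ, besselPowerSeries_zero]
  · simp only [divZ, if_neg hz, genBessel, besselPowerSeries, pow_succ, ← mul_assoc,
      tsum_mul_right, mul_div_cancel_right₀ _ hz]

lemma summable_besselCoeff_mul_pow (c μ z : ℂ) :
    Summable fun n : ℕ => besselCoeff c μ n * z ^ n :=
  .of_norm_bounded (summable_succ_mul_norm_besselCoeff_mul_pow c μ (norm_nonneg z)) fun n => by
    rw [norm_mul, norm_pow, mul_assoc]
    exact le_mul_of_one_le_left (by positivity) (by simp)

lemma summable_natCast_mul_besselCoeff_mul_pow (c μ z : ℂ) :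
    Summable fun n : ℕ => (n : ℂ) * besselCoeff c μ n * z ^ n :=
  .of_norm_bounded (summable_succ_mul_norm_besselCoeff_mul_pow c μ (norm_nonneg z)) fun n => by
    rw [norm_mul, norm_mul, norm_pow, Complex.norm_natCast]
    gcongr
    linarith

lemma norm_besselCoeff_mul_deriv_le (c μ : ℂ) {R : ℝ} (hR : 1 ≤ R) (n : ℕ) {z : ℂ}
    (hz : ‖z‖ ≤ R) :
    ‖besselCoeff c μ n * (n * z ^ (n - 1))‖ ≤ (n + 1) * ‖besselCoeff c μ n‖ * R ^ n := by
  rw [norm_mul, norm_mul, norm_pow, Complex.norm_natCast]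
  have hpow : ‖z‖ ^ (n - 1) ≤ R ^ n :=
    (pow_le_pow_left₀ (norm_nonneg z) hz _).trans (pow_le_pow_right₀ hR (Nat.sub_le n 1))
  have hb := norm_nonneg (besselCoeff c μ n)
  nlinarith [mul_le_mul_of_nonneg_left hpow (mul_nonneg (Nat.cast_nonneg (α := ℝ) n) hb),
    pow_nonneg (norm_nonneg z) (n - 1), pow_nonneg (zero_le_one.trans hR) n]

lemma hasDerivAt_besselPowerSeries (c μ z : ℂ) :
    HasDerivAt (besselPowerSeries c μ) (∑' n : ℕ, besselCoeff c μ n * (n * z ^ (n - 1))) z := by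
  have hR : (1 : ℝ) ≤ ‖z‖ + 1 := by linarith [norm_nonneg z]
  refine hasDerivAt_tsum_of_isPreconnected (g := fun n y => besselCoeff c μ n * y ^ n)
    (g' := fun n y => besselCoeff c μ n * (n * y ^ (n - 1)))
    (summable_succ_mul_norm_besselCoeff_mul_pow c μ (by positivity))
    isOpen_ball (convex_ball 0 (‖z‖ + 1)).isPreconnected
    (fun n y _ => (hasDerivAt_pow n y).const_mul _)
    (fun n y hy => norm_besselCoeff_mul_deriv_le c μ hR n (mem_ball_zero_iff.mp hy).le)
    (mem_ball_self (by linarith)) ?_ (by simp)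
  simpa using summable_of_ne_finset_zero (s := {0}) (by simp +contextual)

lemma differentiable_besselPowerSeries (c μ : ℂ) : Differentiable ℂ (besselPowerSeries c μ) :=
  fun z => (hasDerivAt_besselPowerSeries c μ z).differentiableAt

lemma mul_deriv_besselPowerSeries (c μ z : ℂ) :
    z * deriv (besselPowerSeries c μ) z = ∑' n : ℕ, n * besselCoeff c μ n * z ^ n := by
  rw [(hasDerivAt_besselPowerSeries c μ z).deriv, ← tsum_mul_left]
  congr 1 with (_ | n)
  · simp
  · simp only [Nat.add_sub_cancel, pow_succ]; ring

lemma ascPochhammer_eval_ne_zero {R : Type*} [CommRing R] [IsDomain R] {r : R}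
    (hr : ∀ n : ℕ, r ≠ -(n : R)) (n : ℕ) : (ascPochhammer R n).eval r ≠ 0 := by
  simp only [ne_eq, ascPochhammer_eval_eq_zero_iff, not_exists, not_and]
  exact fun k _ hk => hr k (by rw [hk, neg_neg])

lemma add_mul_besselCoeff_add_one (c : ℂ) {κ : ℂ} (hκ : ∀ n : ℕ, κ ≠ -(n : ℂ)) (n : ℕ) :
    (κ + n) * besselCoeff c (κ + 1) n = κ * besselCoeff c κ n := by
  have hshift : κ * (ascPochhammer ℂ n).eval (κ + 1) = (ascPochhammer ℂ n).eval κ * (κ + n) := by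
    simpa [ascPochhammer_succ_left] using ascPochhammer_succ_eval n κ
  have h₁ := ascPochhammer_eval_ne_zero hκ n
  have hκn : κ + n ≠ 0 := fun h => hκ n (eq_neg_of_add_eq_zero_left h)
  have h₂ : (ascPochhammer ℂ n).eval (κ + 1) ≠ 0 := fun h =>
    mul_ne_zero h₁ hκn (by rw [← hshift, h, mul_zero])
  have h₃ : (n.factorial : ℂ) ≠ 0 := by exact_mod_cast n.factorial_ne_zero
  simp only [besselCoeff]
  field_simp
  linear_combination (-(-c) ^ n) * hshift

lemma mul_besselPowerSeries_eq_add (c : ℂ) {κ : ℂ} (hκ : ∀ n : ℕ, κ ≠ -(n : ℂ)) (z : ℂ) :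
    κ * besselPowerSeries c κ z =
      κ * besselPowerSeries c (κ + 1) z + z * deriv (besselPowerSeries c (κ + 1)) z := by
  rw [mul_deriv_besselPowerSeries, besselPowerSeries, besselPowerSeries, ← tsum_mul_left,
    ← tsum_mul_left, ← ((summable_besselCoeff_mul_pow c (κ + 1) z).mul_left κ).tsum_add
      (summable_natCast_mul_besselCoeff_mul_pow c (κ + 1) z)]
  congr 1 with n
  linear_combination (-z ^ n) * add_mul_besselCoeff_add_one c hκ n

lemma norm_le_norm_add_ofReal {κ : ℂ} (hκ : -(1 / 2 : ℝ) ≤ κ.re) {k : ℝ} (hk : 1 ≤ k) :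
    ‖κ‖ ≤ ‖κ + k‖ := by
  rw [← sq_le_sq₀ (norm_nonneg _) (norm_nonneg _), Complex.sq_norm, Complex.sq_norm,
    normSq_apply, normSq_apply]
  simp only [add_re, add_im, ofReal_re, ofReal_im, add_zero]
  nlinarith

/-- Consequence (4.10), answering the open problem of Andras and Baricz. -/
theorem genBessel_divZ_bound (c κ : ℂ) (hκre : -(1 / 2 : ℝ) ≤ κ.re)
    (hκ : ∀ n : ℕ, κ ≠ -(n : ℂ))
    (M : ℝ) (hM : 0 < M)
    (h : ∀ z ∈ unitDisk, ‖divZ (genBessel κ c) z - 1‖ < M) :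
    ∀ z ∈ unitDisk, ‖divZ (genBessel (κ + 1) c) z - 1‖ < M := by
  simp only [divZ_genBessel] at h ⊢
  set P : ℂ → ℂ := fun z => besselPowerSeries c (κ + 1) z - 1
  have hP : Differentiable ℂ P := (differentiable_besselPowerSeries c (κ + 1)).sub_const 1
  have hP0 : P 0 = 0 := by simp [P, besselPowerSeries_zero]
  intro z₁ hz₁
  by_contra! hz₁M
  obtain ⟨z₀, hz₀z₁, hPz₀, hmax⟩ :=
    exists_norm_eq_of_norm_lt_of_le hP.continuous (by simpa [hP0] using hM) hz₁M
  have hz₀ : z₀ ∈ unitDisk := mem_ball_zero_iff.mpr (hz₀z₁.trans_lt (mem_ball_zero_iff.mp hz₁))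
  obtain ⟨k, hk, hjack⟩ := jack_lemma hP.differentiableOn hP.differentiableAt hP0
    (hPz₀ ▸ hmax) (norm_pos_iff.mp (hPz₀ ▸ hM))
  have hrel : κ * (besselPowerSeries c κ z₀ - 1) = (κ + k) * P z₀ := by
    rw [deriv_sub_const] at hjack
    linear_combination mul_besselPowerSeries_eq_add c hκ z₀ + hjack
  have hκ0 : 0 < ‖κ‖ := norm_pos_iff.mpr (by simpa using hκ 0)
  refine (h z₀ hz₀).not_ge (le_of_mul_le_mul_left ?_ hκ0)
  calc ‖κ‖ * M ≤ ‖κ + k‖ * M := by gcongr; exact norm_le_norm_add_ofReal hκre hk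
    _ = ‖κ‖ * ‖besselPowerSeries c κ z₀ - 1‖ := by rw [← hPz₀, ← norm_mul, ← norm_mul, hrel]
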